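/- arXiv:1706.01614 — 5 statements merged into one kernel-verified Lean document; each statement's English description precedes it below -/
import Mathlib

section
/- (Proposition 1: optimality of truthful bidding for the unbudgeted problem.) Define b* ∈ ℝ^E by b*_ik := r_ik for all (i,k) ∈ E, define π_ik := s_i · f_i(r_ik, r_ik) for all (i,k) ∈ E, and let x* be any maximizer of the linear function x ↦ Σ_{(i,k)∈E} π_ik · x_ik over S. Then for every x ∈ S and every b ∈ ℝ^E with b ≥ 0 it holds that π(x, b) ≤ π(x*, b*); in particular the supremum of π over S × {b ∈ ℝ^E : b ≥ 0} is finite and is attained at (x*, b*). -/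
open MeasureTheory Finset

variable {I K : Type*}

/-- `fwin μ i a b = ∫ (a − t)·1_{(−∞,b]}(t) dμ_i(t)`: expected utility of bidding `b`
with valuation `a` in a second-price auction against highest competing bid with law `μ i`. -/
noncomputable def fwin (μ : I → Measure ℝ) (i : I) (a b : ℝ) : ℝ :=
  ∫ t in Set.Iic b, (a - t) ∂(μ i)

/-- `rho μ i b = μ_i((−∞,b])`: the probability of winning the auction with bid `b`. -/
noncomputable def rho (μ : I → Measure ℝ) (i : I) (b : ℝ) : ℝ :=
  ((μ i) (Set.Iic b)).toReal

variable [Fintype I] [Fintype K] [DecidableEq I] [DecidableEq K]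

/-- The allocation polytope `S`. -/
def alloc (E : Finset (I × K)) : Set ((I × K) → ℝ) :=
  {x | (∀ e ∈ E, 0 ≤ x e) ∧
    ∀ i : I, ∑ e ∈ E.filter (fun e => e.1 = i), x e ≤ 1}

/-- The profit objective `π(x,b)`. -/
noncomputable def profit (E : Finset (I × K)) (μ : I → Measure ℝ) (s : I → ℝ)
    (r : I × K → ℝ) (x b : (I × K) → ℝ) : ℝ :=
  ∑ e ∈ E, s e.1 * x e * fwin μ e.1 (r e) (b e)

/-- Expected spend of campaign `k`: `Σ_{i ∈ I_k} r_ik · s_i · x_ik · ρ_i(b_ik)`. -/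
noncomputable def spend (E : Finset (I × K)) (μ : I → Measure ℝ) (s : I → ℝ)
    (r : I × K → ℝ) (x b : (I × K) → ℝ) (k : K) : ℝ :=
  ∑ e ∈ E.filter (fun e => e.2 = k), r e * s e.1 * x e * rho μ e.1 (b e)

/-- The Lagrangian `L(x,b,λ)`. -/
noncomputable def Lag (E : Finset (I × K)) (μ : I → Measure ℝ) (s : I → ℝ)
    (r : I × K → ℝ) (m : K → ℝ) (x b : (I × K) → ℝ) (lam : K → ℝ) : ℝ :=
  profit E μ s r x b + ∑ k : K, lam k * (m k - spend E μ s r x b k)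

/-- The dual function `L*(λ) = sup {L(x,b,λ) : x ∈ S, b ≥ 0}`. -/
noncomputable def Lstar (E : Finset (I × K)) (μ : I → Measure ℝ) (s : I → ℝ)
    (r : I × K → ℝ) (m : K → ℝ) (lam : K → ℝ) : ℝ :=
  sSup {v : ℝ | ∃ x b : (I × K) → ℝ,
    x ∈ alloc E ∧ (∀ e ∈ E, 0 ≤ b e) ∧ v = Lag E μ s r m x b lam}

lemma fwin_le_truth (μ : I → Measure ℝ) [∀ i, IsProbabilityMeasure (μ i)]
    (hμ : ∀ i, Integrable (fun t => t) (μ i)) (i : I) (a b : ℝ) :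
    fwin μ i a b ≤ fwin μ i a a := by
  have hint : Integrable (fun t => a - t) (μ i) := (integrable_const a).sub (hμ i)
  rcases le_total b a with h | h
  · have hu : Set.Iic b ∪ Set.Ioc b a = Set.Iic a := Set.Iic_union_Ioc_eq_Iic h
    have hd : Disjoint (Set.Iic b) (Set.Ioc b a) := Set.Iic_disjoint_Ioc le_rfl
    have := setIntegral_union hd measurableSet_Ioc hint.integrableOn hint.integrableOn
      (μ := μ i) (f := fun t => a - t)
    have hpos : 0 ≤ ∫ t in Set.Ioc b a, (a - t) ∂(μ i) :=
      setIntegral_nonneg measurableSet_Ioc (fun t ht => by simp; linarith [ht.2])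
    simp only [fwin]
    rw [← hu, this]
    linarith
  · have hu : Set.Iic a ∪ Set.Ioc a b = Set.Iic b := Set.Iic_union_Ioc_eq_Iic h
    have hd : Disjoint (Set.Iic a) (Set.Ioc a b) := Set.Iic_disjoint_Ioc le_rfl
    have := setIntegral_union hd measurableSet_Ioc hint.integrableOn hint.integrableOn
      (μ := μ i) (f := fun t => a - t)
    have hneg : ∫ t in Set.Ioc a b, (a - t) ∂(μ i) ≤ 0 :=
      setIntegral_nonpos measurableSet_Ioc (fun t ht => by simp; linarith [ht.1])
    simp only [fwin]
    rw [← hu, this]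
    linarith

lemma fwin_truth_nonneg (μ : I → Measure ℝ) [∀ i, IsProbabilityMeasure (μ i)]
    (i : I) (a : ℝ) : 0 ≤ fwin μ i a a :=
  setIntegral_nonneg measurableSet_Iic (fun t ht => by simp at ht ⊢; linarith)

/-- Proposition 1: with `b*_ik := r_ik` and `x*` any maximizer of
`x ↦ Σ_{(i,k)∈E} π_ik x_ik` over `S` where `π_ik = s_i f_i(r_ik, r_ik)`, the pair `(x*, b*)`
maximizes the profit `π(x,b)` over `S × {b ≥ 0}`; in particular the supremum is finite and
attained at `(x*, b*)`. -/
theorem stmt_1 (E : Finset (I × K)) (μ : I → Measure ℝ)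
    [∀ i, IsProbabilityMeasure (μ i)]
    (hμ : ∀ i, Integrable (fun t => t) (μ i))
    (s : I → ℝ) (hs : ∀ i, 0 ≤ s i)
    (r : I × K → ℝ) (hr : ∀ e ∈ E, 0 ≤ r e)
    (bstar : (I × K) → ℝ) (hbstar : ∀ e : I × K, bstar e = r e)
    (xstar : (I × K) → ℝ) (hx1 : xstar ∈ alloc E)
    (hx2 : ∀ x ∈ alloc E,
      ∑ e ∈ E, (s e.1 * fwin μ e.1 (r e) (r e)) * x e ≤
      ∑ e ∈ E, (s e.1 * fwin μ e.1 (r e) (r e)) * xstar e) :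
    (∀ x b : (I × K) → ℝ, x ∈ alloc E → (∀ e ∈ E, 0 ≤ b e) →
      profit E μ s r x b ≤ profit E μ s r xstar bstar) ∧
    IsGreatest {v : ℝ | ∃ x b : (I × K) → ℝ,
        x ∈ alloc E ∧ (∀ e ∈ E, 0 ≤ b e) ∧ v = profit E μ s r x b}
      (profit E μ s r xstar bstar) := by
  have key : ∀ x b : (I × K) → ℝ, x ∈ alloc E → (∀ e ∈ E, 0 ≤ b e) →
      profit E μ s r x b ≤ profit E μ s r xstar bstar := by
    intro x b hx hb
    have h1 : profit E μ s r x b ≤ ∑ e ∈ E, (s e.1 * fwin μ e.1 (r e) (r e)) * x e := by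
      apply Finset.sum_le_sum
      intro e he
      have := fwin_le_truth μ hμ e.1 (r e) (b e)
      have hxe := hx.1 e he
      have hse := hs e.1
      nlinarith [mul_nonneg hse hxe]
    have h2 := hx2 x hx
    have h3 : ∑ e ∈ E, (s e.1 * fwin μ e.1 (r e) (r e)) * xstar e
        = profit E μ s r xstar bstar := by
      apply Finset.sum_congr rfl
      intro e he
      rw [hbstar e]
      ring
    linarith
  refine ⟨key, ⟨⟨xstar, bstar, hx1, fun e he => (hbstar e) ▸ hr e he, rfl⟩, ?_⟩⟩
  rintro v ⟨x, b, hx, hb, rfl⟩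
  exact key x b hx hb
end

section
/- (Value of the unbudgeted problem.) The supremum of π(x,b) over x ∈ S and b ∈ ℝ^E with b ≥ 0 equals Σ_{i ∈ I, K_i ≠ ∅} s_i · max(0, max_{k∈K_i} ∫ max(r_ik − t, 0) dμ_i(t)), and this supremum is attained. -/
open MeasureTheory Finset

variable {I K : Type*}

variable [Fintype I] [Fintype K] [DecidableEq I] [DecidableEq K]

lemma fwin_le_int (μ : I → Measure ℝ) (i : I) [IsProbabilityMeasure (μ i)]
    (hμ : Integrable (fun t => t) (μ i)) (a b : ℝ) :
    fwin μ i a b ≤ ∫ t, max (a - t) 0 ∂(μ i) := by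
  have hint : Integrable (fun t => a - t) (μ i) := (integrable_const a).sub hμ
  have hmax : Integrable (fun t => max (a - t) 0) (μ i) := hint.pos_part
  rw [fwin, ← MeasureTheory.integral_indicator measurableSet_Iic]
  refine integral_mono (hint.indicator measurableSet_Iic) hmax (fun t => ?_)
  by_cases h : t ∈ Set.Iic b
  · simp only [Set.indicator_of_mem h]; exact le_max_left _ _
  · simp only [Set.indicator_of_notMem h]; exact le_max_right _ _

lemma fwin_self (μ : I → Measure ℝ) (i : I) (a : ℝ) :
    fwin μ i a a = ∫ t, max (a - t) 0 ∂(μ i) := by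
  rw [fwin, ← MeasureTheory.integral_indicator measurableSet_Iic]
  congr 1
  funext t
  by_cases h : t ∈ Set.Iic a
  · rw [Set.indicator_of_mem h, max_eq_left (by simpa [sub_nonneg] using h)]
  · rw [Set.indicator_of_notMem h,
      max_eq_right (by simp only [Set.mem_Iic, not_le] at h; linarith)]

/-- Best achievable value for impression type `i`. -/
noncomputable def Mval (E : Finset (I × K)) (μ : I → Measure ℝ) (r : I × K → ℝ) (i : I) : ℝ :=
  (insert (0 : ℝ) ((E.filter (fun e => e.1 = i)).image
    (fun e => ∫ t, max (r e - t) 0 ∂(μ i)))).max' (Finset.insert_nonempty _ _)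

/-- Value of the unbudgeted problem: the supremum of `π(x,b)` over `x ∈ S`, `b ≥ 0` equals
`Σ_i s_i · max(0, max_{k ∈ K_i} ∫ max(r_ik − t, 0) dμ_i(t))` (the term being `0` when
`K_i = ∅`), and this supremum is attained. -/
theorem stmt_4 (E : Finset (I × K)) (μ : I → Measure ℝ)
    [∀ i, IsProbabilityMeasure (μ i)]
    (hμ : ∀ i, Integrable (fun t => t) (μ i))
    (s : I → ℝ) (hs : ∀ i, 0 ≤ s i)
    (r : I × K → ℝ) (hr : ∀ e ∈ E, 0 ≤ r e) :
    IsGreatest {v : ℝ | ∃ x b : (I × K) → ℝ,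
        x ∈ alloc E ∧ (∀ e ∈ E, 0 ≤ b e) ∧ v = profit E μ s r x b}
      (∑ i : I, s i *
        (insert (0 : ℝ) ((E.filter (fun e => e.1 = i)).image
          (fun e => ∫ t, max (r e - t) 0 ∂(μ i)))).max'
          (Finset.insert_nonempty _ _)) := by
  classical
  show IsGreatest _ (∑ i : I, s i * Mval E μ r i)
  have hmemF : ∀ e ∈ E, e ∈ E.filter (fun e' => e'.1 = e.1) := by
    intro e he; simp [Finset.mem_filter, he]
  have hM0 : ∀ i, 0 ≤ Mval E μ r i := by
    intro i
    exact Finset.le_max' _ 0 (Finset.mem_insert_self _ _)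
  have hMge : ∀ e ∈ E, (∫ t, max (r e - t) 0 ∂(μ e.1)) ≤ Mval E μ r e.1 := by
    intro e he
    exact Finset.le_max' _ _ (Finset.mem_insert_of_mem
      (Finset.mem_image_of_mem (fun e' => ∫ t, max (r e' - t) 0 ∂(μ e.1)) (hmemF e he)))
  have hMempty : ∀ i, E.filter (fun e => e.1 = i) = ∅ → Mval E μ r i = 0 := by
    intro i h
    simp only [Mval, h, Finset.image_empty]
    simp
  constructor
  · -- attained
    by_cases hE : E.Nonempty
    · have hpick : ∀ i, (E.filter (fun e => e.1 = i)).Nonempty →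
          ∃ e ∈ E.filter (fun e => e.1 = i), ∀ e' ∈ E.filter (fun e => e.1 = i),
          (∫ t, max (r e' - t) 0 ∂(μ i)) ≤ ∫ t, max (r e - t) 0 ∂(μ i) := fun i h =>
        Finset.exists_max_image _ (fun e => ∫ t, max (r e - t) 0 ∂(μ i)) h
      set c : I → I × K := fun i =>
        if h : (E.filter (fun e => e.1 = i)).Nonempty then (hpick i h).choose
        else hE.choose with hc
      have hc1 : ∀ i, (E.filter (fun e => e.1 = i)).Nonempty →
          c i ∈ E.filter (fun e => e.1 = i) := by
        intro i h
        simp only [hc, dif_pos h]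
        exact (hpick i h).choose_spec.1
      have hc2 : ∀ i (h : (E.filter (fun e => e.1 = i)).Nonempty),
          ∀ e' ∈ E.filter (fun e => e.1 = i),
          (∫ t, max (r e' - t) 0 ∂(μ i)) ≤ ∫ t, max (r (c i) - t) 0 ∂(μ i) := by
        intro i h
        simp only [hc, dif_pos h]
        exact (hpick i h).choose_spec.2
      set x : (I × K) → ℝ := fun e =>
        if (E.filter (fun e' => e'.1 = e.1)).Nonempty ∧ e = c e.1 then 1 else 0 with hx
      have hxval : ∀ i, (E.filter (fun e => e.1 = i)).Nonempty →
          ∀ e ∈ E.filter (fun e => e.1 = i), x e = if e = c i then 1 else 0 := by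
        intro i h e he
        have he1 : e.1 = i := (Finset.mem_filter.mp he).2
        simp only [hx, he1, h, true_and]
      refine ⟨x, r, ⟨?_, ?_⟩, hr, ?_⟩
      · intro e _
        simp only [hx]
        split <;> norm_num
      · intro i
        by_cases h : (E.filter (fun e => e.1 = i)).Nonempty
        · rw [Finset.sum_congr rfl (hxval i h),
            Finset.sum_ite_eq' (E.filter (fun e => e.1 = i)) (c i) (fun _ => (1:ℝ))]
          split <;> norm_num
        · rw [Finset.not_nonempty_iff_eq_empty.mp h]
          simp
      · rw [profit, ← Finset.sum_fiberwise E (fun e => e.1)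
          (fun e => s e.1 * x e * fwin μ e.1 (r e) (r e))]
        refine Finset.sum_congr rfl (fun i _ => ?_)
        by_cases h : (E.filter (fun e => e.1 = i)).Nonempty
        · have hci := hc1 i h
          have hci1 : (c i).1 = i := (Finset.mem_filter.mp hci).2
          have hMi : Mval E μ r i = ∫ t, max (r (c i) - t) 0 ∂(μ i) := by
            refine le_antisymm (Finset.max'_le _ _ _ ?_)
              (Finset.le_max' _ _ (Finset.mem_insert_of_mem
                (Finset.mem_image_of_mem (fun e' => ∫ t, max (r e' - t) 0 ∂(μ i)) hci)))
            intro y hy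
            rcases Finset.mem_insert.mp hy with rfl | hy
            · exact integral_nonneg (fun t => le_max_right _ _)
            · obtain ⟨e, he, rfl⟩ := Finset.mem_image.mp hy
              exact hc2 i h e he
          rw [Finset.sum_eq_single_of_mem (c i) hci]
          · rw [hxval i h (c i) hci, if_pos rfl, hci1, hMi, fwin_self]
            ring
          · intro e he hne
            rw [hxval i h e he, if_neg hne]
            ring
        · have h' := Finset.not_nonempty_iff_eq_empty.mp h
          rw [h', hMempty i h']
          simp
    · rw [Finset.not_nonempty_iff_eq_empty] at hE
      subst hE
      refine ⟨0, 0, ⟨by simp, by simp⟩, by simp, ?_⟩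
      have hz : ∀ i : I, Mval (∅ : Finset (I × K)) μ r i = 0 := fun i => hMempty i (by simp)
      simp [profit, hz]
  · -- upper bound
    rintro v ⟨x, b, ⟨hx0, hx1⟩, hb, rfl⟩
    calc profit E μ s r x b ≤ ∑ e ∈ E, s e.1 * x e * Mval E μ r e.1 := by
          refine Finset.sum_le_sum (fun e he => ?_)
          exact mul_le_mul_of_nonneg_left
            ((fwin_le_int μ e.1 (hμ e.1) (r e) (b e)).trans (hMge e he))
            (mul_nonneg (hs e.1) (hx0 e he))
      _ = ∑ i : I, ∑ e ∈ E.filter (fun e => e.1 = i), s e.1 * x e * Mval E μ r e.1 :=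
          (Finset.sum_fiberwise E (fun e => e.1) _).symm
      _ ≤ ∑ i : I, s i * Mval E μ r i := by
          refine Finset.sum_le_sum (fun i _ => ?_)
          have hcg : ∀ e ∈ E.filter (fun e => e.1 = i),
              s e.1 * x e * Mval E μ r e.1 = (s i * Mval E μ r i) * x e := by
            intro e he
            rw [(Finset.mem_filter.mp he).2]; ring
          rw [Finset.sum_congr rfl hcg, ← Finset.mul_sum]
          calc (s i * Mval E μ r i) * ∑ e ∈ E.filter (fun e => e.1 = i), x e
              ≤ (s i * Mval E μ r i) * 1 :=
                mul_le_mul_of_nonneg_left (hx1 i) (mul_nonneg (hs i) (hM0 i))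
            _ = s i * Mval E μ r i := mul_one _
end

section
/- (Theorem 1(i), finiteness part: the dual function is finite everywhere.) Assume μ_i((−∞,0]) = 0 for all i ∈ I (i.e., the highest competing bid is strictly positive almost surely). Then for every λ ∈ ℝ^K, the set {L(x,b,λ) : x ∈ S, b ∈ ℝ^E, b ≥ 0} is nonempty and bounded above; in particular L*(λ) is a finite real number for every λ ∈ ℝ^K. -/
open MeasureTheory Finset

variable {I K : Type*}

variable [Fintype I] [Fintype K] [DecidableEq I] [DecidableEq K]

/-- Theorem 1(i), finiteness part: if the highest competing bid is strictly positive
almost surely (`μ_i((−∞,0]) = 0` for all `i`), then for every `λ ∈ ℝ^K` the set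
`{L(x,b,λ) : x ∈ S, b ≥ 0}` is nonempty and bounded above; in particular the dual -/

lemma rho_nonneg' {I : Type*} (μ : I → Measure ℝ) (i : I) (b : ℝ) :
    0 ≤ rho μ i b := ENNReal.toReal_nonneg

lemma rho_le_one' {I : Type*} (μ : I → Measure ℝ) [∀ i, IsProbabilityMeasure (μ i)]
    (i : I) (b : ℝ) : rho μ i b ≤ 1 := by
  have h := prob_le_one (μ := μ i) (s := Set.Iic b)
  calc ((μ i) (Set.Iic b)).toReal ≤ (1 : ENNReal).toReal :=
        ENNReal.toReal_mono (by simp) h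
    _ = 1 := by simp

lemma fwin_le' {I : Type*} (μ : I → Measure ℝ) [∀ i, IsProbabilityMeasure (μ i)]
    (hμ : ∀ i, Integrable (fun t => t) (μ i))
    (hμ0 : ∀ i, μ i (Set.Iic 0) = 0) (i : I) (a b : ℝ) (ha : 0 ≤ a) :
    fwin μ i a b ≤ a := by
  have ht : ∀ᵐ t ∂(μ i), 0 ≤ t := by
    rw [ae_iff]
    refine measure_mono_null ?_ (hμ0 i)
    intro t ht
    simp only [Set.mem_setOf_eq, not_le] at ht
    exact Set.mem_Iic.2 ht.le
  have hle : (fun t : ℝ => a - t) ≤ᵐ[(μ i).restrict (Set.Iic b)] (fun _ => a) :=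
    ae_restrict_of_ae (ht.mono (fun t h => by simp [h]))
  have hint : Integrable (fun t : ℝ => a - t) ((μ i).restrict (Set.Iic b)) :=
    ((integrable_const a).sub (hμ i)).restrict
  have h1 : (∫ t in Set.Iic b, (a - t) ∂(μ i)) ≤ ∫ _ in Set.Iic b, a ∂(μ i) :=
    integral_mono_ae hint (integrable_const a) hle
  have h2 : (∫ _ in Set.Iic b, a ∂(μ i)) = ((μ i) (Set.Iic b)).toReal * a := by
    rw [setIntegral_const]; rfl
  calc fwin μ i a b ≤ ((μ i) (Set.Iic b)).toReal * a := h1.trans_eq h2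
    _ ≤ 1 * a := mul_le_mul_of_nonneg_right (rho_le_one' μ i b) ha
    _ = a := one_mul a

/-- Theorem 1(i) finiteness. -/
theorem stmt_5 (E : Finset (I × K)) (μ : I → Measure ℝ)
    [∀ i, IsProbabilityMeasure (μ i)]
    (hμ : ∀ i, Integrable (fun t => t) (μ i))
    (hμ0 : ∀ i, μ i (Set.Iic 0) = 0)
    (s : I → ℝ) (hs : ∀ i, 0 ≤ s i)
    (r : I × K → ℝ) (hr : ∀ e ∈ E, 0 ≤ r e)
    (m : K → ℝ) (lam : K → ℝ) :
    ({v : ℝ | ∃ x b : (I × K) → ℝ,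
        x ∈ alloc E ∧ (∀ e ∈ E, 0 ≤ b e) ∧ v = Lag E μ s r m x b lam}).Nonempty ∧
    BddAbove {v : ℝ | ∃ x b : (I × K) → ℝ,
        x ∈ alloc E ∧ (∀ e ∈ E, 0 ≤ b e) ∧ v = Lag E μ s r m x b lam} := by
  constructor
  · refine ⟨Lag E μ s r m 0 0 lam, 0, 0, ?_, fun e _ => le_refl 0, rfl⟩
    exact ⟨fun e _ => le_refl 0, fun i => by simp⟩
  · refine ⟨(∑ e ∈ E, s e.1 * r e) +
      ∑ k : K, |lam k| * (|m k| + ∑ e ∈ E, r e * s e.1), ?_⟩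
    rintro v ⟨x, b, ⟨hx0, hx1⟩, hb, rfl⟩
    have hxle : ∀ e ∈ E, x e ≤ 1 := by
      intro e he
      refine le_trans ?_ (hx1 e.1)
      refine Finset.single_le_sum (fun e' he' => hx0 e' (Finset.mem_filter.1 he').1) ?_
      exact Finset.mem_filter.2 ⟨he, rfl⟩
    have hprofit : profit E μ s r x b ≤ ∑ e ∈ E, s e.1 * r e := by
      refine Finset.sum_le_sum (fun e he => ?_)
      have hfw := fwin_le' μ hμ hμ0 e.1 (r e) (b e) (hr e he)
      have hx := hx0 e he
      have hx1' := hxle e he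
      nlinarith [mul_le_mul_of_nonneg_left hfw (mul_nonneg (hs e.1) hx),
        mul_le_mul_of_nonneg_left hx1' (mul_nonneg (hs e.1) (hr e he))]
    have hspend : ∀ k : K, 0 ≤ spend E μ s r x b k ∧
        spend E μ s r x b k ≤ ∑ e ∈ E, r e * s e.1 := by
      intro k
      constructor
      · refine Finset.sum_nonneg (fun e he => ?_)
        have he' := (Finset.mem_filter.1 he).1
        have := rho_nonneg' μ e.1 (b e)
        exact mul_nonneg (mul_nonneg (mul_nonneg (hr e he') (hs e.1)) (hx0 e he')) this
      · refine le_trans (Finset.sum_le_sum (fun e he => ?_))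
          (Finset.sum_le_sum_of_subset_of_nonneg (Finset.filter_subset _ _)
            (fun e he _ => mul_nonneg (hr e he) (hs e.1)))
        have he' := (Finset.mem_filter.1 he).1
        have h1 := rho_nonneg' μ e.1 (b e)
        have h2 := rho_le_one' μ e.1 (b e)
        have h3 := hx0 e he'
        have h4 := hxle e he'
        nlinarith [mul_le_mul h4 h2 h1 zero_le_one, mul_nonneg (hr e he') (hs e.1)]
    have hlag : ∀ k : K, lam k * (m k - spend E μ s r x b k) ≤
        |lam k| * (|m k| + ∑ e ∈ E, r e * s e.1) := by
      intro k
      obtain ⟨h1, h2⟩ := hspend k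
      calc lam k * (m k - spend E μ s r x b k)
          ≤ |lam k * (m k - spend E μ s r x b k)| := le_abs_self _
        _ = |lam k| * |m k - spend E μ s r x b k| := abs_mul _ _
        _ ≤ |lam k| * (|m k| + ∑ e ∈ E, r e * s e.1) := by
            refine mul_le_mul_of_nonneg_left ?_ (abs_nonneg _)
            refine (abs_sub _ _).trans ?_
            rw [abs_of_nonneg h1]
            linarith
    exact add_le_add hprofit (Finset.sum_le_sum (fun k _ => hlag k))
end

section
/- (Procedure 1 computes a maximizer of the Lagrangian subproblem.) Let λ ∈ ℝ^K satisfy 0 ≤ λ_k ≤ 1 for all k ∈ K. Define b*(λ) ∈ ℝ^E by b*(λ)_ik := (1 − λ_k)·r_ik, define π(λ)_ik := s_i · f_i((1 − λ_k)·r_ik, (1 − λ_k)·r_ik) for all (i,k) ∈ E, and let x*(λ) be any maximizer of x ↦ Σ_{(i,k)∈E} π(λ)_ik · x_ik over S. Then for every x ∈ S and every b ∈ ℝ^E with b ≥ 0, L(x, b, λ) ≤ L(x*(λ), b*(λ), λ); in particular L*(λ) = L(x*(λ), b*(λ), λ). -/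
open MeasureTheory Finset

variable {I K : Type*}

variable [Fintype I] [Fintype K] [DecidableEq I] [DecidableEq K]

/-!
The multiplier `λ_k` folds the spend term `r_ik ρ_i(b_ik)` into the profit, so that
`L(x, b, λ) = Σ_k λ_k m_k + Σ_{(i,k)} s_i x_ik f_i((1 − λ_k) r_ik, b_ik)`: the Lagrangian is the
profit of second-price auctions with shaded valuations `(1 − λ_k) r_ik`. In such an auction
bidding the valuation is optimal, since `f_i(a, b)` integrates `a − t` over the won auctions
`t ≤ b`, and `a − t ≥ 0` exactly when `t ≤ a`. At `b = b*(λ)` what remains is linear in `x` with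
coefficients `π(λ)`, and `x*(λ)` maximizes it over `S`.
-/

section Auction

variable {ι : Type*} (μ : ι → Measure ℝ) (i : ι) [IsFiniteMeasure (μ i)]

lemma fwin_eq_mul_rho_sub (hμ : Integrable (fun t => t) (μ i)) (a b : ℝ) :
    fwin μ i a b = a * rho μ i b - ∫ t in Set.Iic b, t ∂(μ i) := by
  rw [fwin, integral_sub (integrable_const a) hμ.restrict, setIntegral_const, smul_eq_mul,
    mul_comm, rho, measureReal_def]

lemma fwin_sub_mul_rho (hμ : Integrable (fun t => t) (μ i)) (a c b : ℝ) :
    fwin μ i a b - c * rho μ i b = fwin μ i (a - c) b := by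
  rw [fwin_eq_mul_rho_sub μ i hμ, fwin_eq_mul_rho_sub μ i hμ]
  ring

lemma fwin_le_fwin_self (hμ : Integrable (fun t => t) (μ i)) (a b : ℝ) :
    fwin μ i a b ≤ fwin μ i a a := by
  have hint : Integrable (fun t => a - t) (μ i) := (integrable_const a).sub hμ
  rw [fwin, fwin, ← integral_indicator measurableSet_Iic, ← integral_indicator measurableSet_Iic]
  refine integral_mono (hint.indicator measurableSet_Iic) (hint.indicator measurableSet_Iic)
    fun t => ?_
  simp only [Set.indicator_apply, Set.mem_Iic]
  split_ifs <;> linarith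

end Auction

section Lagrangian

variable {ι κ : Type*} [Fintype κ] [DecidableEq κ]

/-- The coefficient `π(λ)_ik = s_i f_i((1 − λ_k) r_ik, (1 − λ_k) r_ik)`. -/
noncomputable def truthfulProfit (μ : ι → Measure ℝ) (s : ι → ℝ) (r : ι × κ → ℝ) (lam : κ → ℝ)
    (e : ι × κ) : ℝ :=
  s e.1 * fwin μ e.1 ((1 - lam e.2) * r e) ((1 - lam e.2) * r e)

variable (E : Finset (ι × κ)) (μ : ι → Measure ℝ) (s : ι → ℝ) (r : ι × κ → ℝ) (m : κ → ℝ)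
  (x b : ι × κ → ℝ) (lam : κ → ℝ)

lemma sum_mul_spend :
    ∑ k, lam k * spend E μ s r x b k =
      ∑ e ∈ E, lam e.2 * (r e * s e.1 * x e * rho μ e.1 (b e)) := by
  rw [← sum_fiberwise E Prod.snd]
  refine sum_congr rfl fun k _ => ?_
  rw [spend, mul_sum]
  exact sum_congr rfl fun e he => by rw [(mem_filter.mp he).2]

variable [∀ i, IsFiniteMeasure (μ i)]

lemma Lag_eq_sum_fwin (hμ : ∀ i, Integrable (fun t => t) (μ i)) :
    Lag E μ s r m x b lam =
      ∑ k, lam k * m k + ∑ e ∈ E, s e.1 * x e * fwin μ e.1 ((1 - lam e.2) * r e) (b e) := by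
  have hshift : ∀ e ∈ E, s e.1 * x e * fwin μ e.1 (r e) (b e) -
      lam e.2 * (r e * s e.1 * x e * rho μ e.1 (b e)) =
        s e.1 * x e * fwin μ e.1 ((1 - lam e.2) * r e) (b e) := fun e _ => by
    rw [sub_mul, one_mul, ← fwin_sub_mul_rho μ e.1 (hμ e.1)]
    ring
  rw [Lag, profit, ← sum_congr rfl hshift, sum_sub_distrib, ← sum_mul_spend]
  simp only [mul_sub, sum_sub_distrib]
  ring

lemma Lag_le_sum_truthfulProfit (hμ : ∀ i, Integrable (fun t => t) (μ i))
    (hs : ∀ i, 0 ≤ s i) (hx : ∀ e ∈ E, 0 ≤ x e) :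
    Lag E μ s r m x b lam ≤ ∑ k, lam k * m k + ∑ e ∈ E, truthfulProfit μ s r lam e * x e := by
  rw [Lag_eq_sum_fwin E μ s r m x b lam hμ]
  refine (add_le_add_iff_left _).2 (sum_le_sum fun e he => ?_)
  calc s e.1 * x e * fwin μ e.1 ((1 - lam e.2) * r e) (b e)
      ≤ s e.1 * x e * fwin μ e.1 ((1 - lam e.2) * r e) ((1 - lam e.2) * r e) :=
        mul_le_mul_of_nonneg_left (fwin_le_fwin_self μ e.1 (hμ e.1) _ _)
          (mul_nonneg (hs e.1) (hx e he))
    _ = truthfulProfit μ s r lam e * x e := by rw [truthfulProfit]; ring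

lemma Lag_eq_sum_truthfulProfit (hμ : ∀ i, Integrable (fun t => t) (μ i))
    (hb : ∀ e ∈ E, b e = (1 - lam e.2) * r e) :
    Lag E μ s r m x b lam = ∑ k, lam k * m k + ∑ e ∈ E, truthfulProfit μ s r lam e * x e := by
  rw [Lag_eq_sum_fwin E μ s r m x b lam hμ]
  congr 1
  refine sum_congr rfl fun e he => ?_
  rw [hb e he, truthfulProfit]
  ring

end Lagrangian

/-- Procedure 1 computes a maximizer of the Lagrangian subproblem: for `0 ≤ λ ≤ 1`,
setting `b*(λ)_ik := (1 − λ_k) r_ik` and letting `x*(λ)` maximize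
`x ↦ Σ_{(i,k)∈E} π(λ)_ik x_ik` over `S`, where `π(λ)_ik := s_i f_i((1−λ_k)r_ik, (1−λ_k)r_ik)`,
the pair `(x*(λ), b*(λ))` maximizes `L(·,·,λ)` over `S × {b ≥ 0}`, so `L*(λ)` is attained
there. -/
theorem stmt_7 (E : Finset (I × K)) (μ : I → Measure ℝ)
    [∀ i, IsProbabilityMeasure (μ i)]
    (hμ : ∀ i, Integrable (fun t => t) (μ i))
    (s : I → ℝ) (hs : ∀ i, 0 ≤ s i)
    (r : I × K → ℝ) (hr : ∀ e ∈ E, 0 ≤ r e)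
    (m : K → ℝ)
    (lam : K → ℝ) (hlam : ∀ k, 0 ≤ lam k ∧ lam k ≤ 1)
    (bstar : (I × K) → ℝ) (hbstar : ∀ e : I × K, bstar e = (1 - lam e.2) * r e)
    (xstar : (I × K) → ℝ) (hx1 : xstar ∈ alloc E)
    (hx2 : ∀ x ∈ alloc E,
      ∑ e ∈ E, (s e.1 * fwin μ e.1 ((1 - lam e.2) * r e) ((1 - lam e.2) * r e)) * x e ≤
      ∑ e ∈ E, (s e.1 * fwin μ e.1 ((1 - lam e.2) * r e) ((1 - lam e.2) * r e)) * xstar e) :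
    (∀ x b : (I × K) → ℝ, x ∈ alloc E → (∀ e ∈ E, 0 ≤ b e) →
      Lag E μ s r m x b lam ≤ Lag E μ s r m xstar bstar lam) ∧
    Lstar E μ s r m lam = Lag E μ s r m xstar bstar lam := by
  have hbstar_nonneg : ∀ e ∈ E, 0 ≤ bstar e := fun e he =>
    hbstar e ▸ mul_nonneg (sub_nonneg.2 (hlam e.2).2) (hr e he)
  have hmax : ∀ x b : (I × K) → ℝ, x ∈ alloc E → (∀ e ∈ E, 0 ≤ b e) →
      Lag E μ s r m x b lam ≤ Lag E μ s r m xstar bstar lam := fun x b hx _ => by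
    rw [Lag_eq_sum_truthfulProfit E μ s r m xstar bstar lam hμ fun e _ => hbstar e]
    exact (Lag_le_sum_truthfulProfit E μ s r m x b lam hμ hs hx.1).trans
      ((add_le_add_iff_left _).2 (hx2 x hx))
  refine ⟨hmax, IsGreatest.csSup_eq ⟨⟨xstar, bstar, hx1, hbstar_nonneg, rfl⟩, ?_⟩⟩
  rintro v ⟨x, b, hx, hb, rfl⟩
  exact hmax x b hx hb
end

section
/- (Closed form of the dual function.) Assume μ_i((−∞,0]) = 0 for all i ∈ I. Then for every λ ∈ ℝ^K, L*(λ) = Σ_{k∈K} λ_k · m_k + Σ_{i ∈ I, K_i ≠ ∅} s_i · max(0, max_{k∈K_i} ∫ max((1 − λ_k)·r_ik − t, 0) dμ_i(t)). -/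
/-!
Substituting the spend into the Lagrangian turns the value `r_ik` of every edge into
`(1 - λ_k) r_ik`, so `L(x, b, λ) = Σ_k λ_k m_k + Σ_i s_i Σ_{k ∈ K_i} x_ik f_i((1 - λ_k) r_ik, b_ik)`.
For fixed `x` each bid is optimised separately: `f_i(a, b) ≤ E[(a - B_i^max)⁺]`, with equality at
`b = max(a, 0)` because `B_i^max > 0` almost surely. What remains is a linear function of each
row `(x_ik)_k` over the simplex `{x ≥ 0, Σ_k x_ik ≤ 1}`, whose maximum is attained at a vertex:
either `x = 0` or a unit vector at the best campaign.
-/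

open MeasureTheory Finset

variable {I K : Type*}

variable [Fintype I] [Fintype K] [DecidableEq I] [DecidableEq K]

section Simplex

variable {α R : Type*} [Semiring R] [LinearOrder R] [IsOrderedRing R]

theorem sum_mul_le_max'_insert_zero (T : Finset α) (g x : α → R)
    (hx0 : ∀ a ∈ T, 0 ≤ x a) (hx1 : ∑ a ∈ T, x a ≤ 1) :
    ∑ a ∈ T, x a * g a ≤ (insert 0 (T.image g)).max' (insert_nonempty _ _) := by
  set M := (insert 0 (T.image g)).max' (insert_nonempty _ _)
  have hM0 : 0 ≤ M := le_max' _ 0 (mem_insert_self _ _)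
  calc ∑ a ∈ T, x a * g a
      ≤ ∑ a ∈ T, x a * M := sum_le_sum fun a ha =>
        mul_le_mul_of_nonneg_left
          (le_max' _ _ (mem_insert_of_mem (mem_image_of_mem g ha))) (hx0 a ha)
    _ = (∑ a ∈ T, x a) * M := (sum_mul _ _ _).symm
    _ ≤ M := mul_le_of_le_one_left hM0 hx1

theorem exists_sum_mul_eq_max'_insert_zero (T : Finset α) (g : α → R) :
    ∃ x : α → R, (∀ a ∈ T, 0 ≤ x a) ∧ ∑ a ∈ T, x a ≤ 1 ∧
      ∑ a ∈ T, x a * g a = (insert 0 (T.image g)).max' (insert_nonempty _ _) := by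
  classical
  rcases mem_insert.mp (max'_mem (insert 0 (T.image g)) (insert_nonempty _ _)) with h | h
  · exact ⟨0, fun _ _ => le_rfl, by simp, by simp [h]⟩
  · obtain ⟨a₀, ha₀, hga₀⟩ := mem_image.mp h
    refine ⟨fun a => if a = a₀ then 1 else 0, fun a _ => ite_nonneg zero_le_one le_rfl, ?_, ?_⟩
    · simp [ha₀]
    · simp [ha₀, hga₀]

end Simplex

section Auction

variable {ι : Type*} (μ : ι → Measure ℝ) (i : ι)

theorem fwin_le_integral_max [IsFiniteMeasure (μ i)] (hμ : Integrable (fun t => t) (μ i))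
    (a b : ℝ) : fwin μ i a b ≤ ∫ t, max (a - t) 0 ∂(μ i) := by
  have hint : Integrable (fun t => a - t) (μ i) := (integrable_const a).sub hμ
  rw [fwin, ← integral_indicator measurableSet_Iic]
  refine integral_mono (hint.indicator measurableSet_Iic) hint.pos_part fun t => ?_
  by_cases ht : t ∈ Set.Iic b
  · simp only [Set.indicator_of_mem ht, le_max_left]
  · simp only [Set.indicator_of_notMem ht, le_max_right]

theorem indicator_Iic_max_sub_eq {a t : ℝ} (ht : 0 < t) :
    (Set.Iic (max a 0)).indicator (fun t => a - t) t = max (a - t) 0 := by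
  by_cases hta : t ≤ a
  · rw [Set.indicator_of_mem (Set.mem_Iic.mpr (le_max_of_le_left hta)),
      max_eq_left (sub_nonneg.mpr hta)]
  · have hmax : t ∉ Set.Iic (max a 0) := by simp [not_le.mp hta, ht]
    rw [Set.indicator_of_notMem hmax, max_eq_right (by linarith)]

theorem fwin_max_zero_eq_integral_max (hμ0 : μ i (Set.Iic 0) = 0) (a : ℝ) :
    fwin μ i a (max a 0) = ∫ t, max (a - t) 0 ∂(μ i) := by
  rw [fwin, ← integral_indicator measurableSet_Iic]
  refine integral_congr_ae ?_
  filter_upwards [measure_eq_zero_iff_ae_notMem.mp hμ0] with t ht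
  exact indicator_Iic_max_sub_eq (not_le.mp ht)

theorem fwin_one_sub_mul [IsFiniteMeasure (μ i)] (hμ : Integrable (fun t => t) (μ i))
    (a c b : ℝ) : fwin μ i ((1 - c) * a) b = fwin μ i a b - c * a * rho μ i b := by
  have hint : Integrable (fun t => a - t) ((μ i).restrict (Set.Iic b)) :=
    ((integrable_const a).sub hμ).restrict
  calc fwin μ i ((1 - c) * a) b = ∫ t in Set.Iic b, ((a - t) - c * a) ∂(μ i) := by
        simp only [fwin]; congr 1 with t; ring
    _ = fwin μ i a b - c * a * rho μ i b := by
        rw [integral_sub hint (integrable_const _), setIntegral_const, smul_eq_mul, fwin, rho,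
          measureReal_def, mul_comm]

end Auction

section Lagrangian

variable (E : Finset (I × K)) (μ : I → Measure ℝ) (s : I → ℝ) (r : I × K → ℝ) (m : K → ℝ)
  (x b : (I × K) → ℝ) (lam : K → ℝ)

theorem Lag_eq_sum_fiberwise [∀ i, IsFiniteMeasure (μ i)]
    (hμ : ∀ i, Integrable (fun t => t) (μ i)) :
    Lag E μ s r m x b lam = ∑ k : K, lam k * m k +
      ∑ i : I, s i * ∑ e ∈ E.filter (fun e => e.1 = i),
        x e * fwin μ i ((1 - lam e.2) * r e) (b e) := by
  have hspend : ∑ k : K, lam k * spend E μ s r x b k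
      = ∑ e ∈ E, lam e.2 * (r e * s e.1 * x e * rho μ e.1 (b e)) := by
    rw [← sum_fiberwise E Prod.snd]
    refine sum_congr rfl fun k _ => ?_
    rw [spend, mul_sum]
    exact sum_congr rfl fun e he => by rw [(mem_filter.mp he).2]
  have hedge : ∀ e ∈ E, s e.1 * x e * fwin μ e.1 (r e) (b e)
      - lam e.2 * (r e * s e.1 * x e * rho μ e.1 (b e))
      = s e.1 * (x e * fwin μ e.1 ((1 - lam e.2) * r e) (b e)) := fun e _ => by
    rw [fwin_one_sub_mul μ e.1 (hμ e.1)]; ring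
  have hrows : ∑ e ∈ E, s e.1 * (x e * fwin μ e.1 ((1 - lam e.2) * r e) (b e))
      = ∑ i : I, s i * ∑ e ∈ E.filter (fun e => e.1 = i),
        x e * fwin μ i ((1 - lam e.2) * r e) (b e) := by
    rw [← sum_fiberwise E Prod.fst]
    refine sum_congr rfl fun i _ => ?_
    rw [mul_sum]
    exact sum_congr rfl fun e he => by rw [(mem_filter.mp he).2]
  simp only [Lag, profit, mul_sub, sum_sub_distrib, hspend]
  rw [← hrows, ← sum_congr rfl hedge, sum_sub_distrib]
  ring

noncomputable def bestDiscountedSurplus (i : I) : ℝ :=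
  (insert (0 : ℝ) ((E.filter (fun e => e.1 = i)).image
    (fun e => ∫ t, max ((1 - lam e.2) * r e - t) 0 ∂(μ i)))).max' (insert_nonempty _ _)

theorem Lag_le_of_mem_alloc [∀ i, IsFiniteMeasure (μ i)]
    (hμ : ∀ i, Integrable (fun t => t) (μ i)) (hs : ∀ i, 0 ≤ s i) (hx : x ∈ alloc E) :
    Lag E μ s r m x b lam
      ≤ ∑ k : K, lam k * m k + ∑ i : I, s i * bestDiscountedSurplus E μ r lam i := by
  rw [Lag_eq_sum_fiberwise E μ s r m x b lam hμ]
  have hx0 : ∀ i, ∀ e ∈ E.filter (fun e => e.1 = i), 0 ≤ x e :=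
    fun i e he => hx.1 e (mem_filter.mp he).1
  gcongr with i _
  · exact hs i
  calc ∑ e ∈ E.filter (fun e => e.1 = i), x e * fwin μ i ((1 - lam e.2) * r e) (b e)
      ≤ ∑ e ∈ E.filter (fun e => e.1 = i), x e * ∫ t, max ((1 - lam e.2) * r e - t) 0 ∂(μ i) :=
        sum_le_sum fun e he => mul_le_mul_of_nonneg_left
          (fwin_le_integral_max μ i (hμ i) _ _) (hx0 i e he)
    _ ≤ _ := sum_mul_le_max'_insert_zero _ _ _ (hx0 i) (hx.2 i)

theorem exists_Lag_eq_of_max_zero_bid [∀ i, IsFiniteMeasure (μ i)]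
    (hμ : ∀ i, Integrable (fun t => t) (μ i)) (hμ0 : ∀ i, μ i (Set.Iic 0) = 0) :
    ∃ x ∈ alloc E, Lag E μ s r m x (fun e => max ((1 - lam e.2) * r e) 0) lam
      = ∑ k : K, lam k * m k + ∑ i : I, s i * bestDiscountedSurplus E μ r lam i := by
  choose y hy0 hy1 hyg using fun i => exists_sum_mul_eq_max'_insert_zero
    (E.filter (fun e => e.1 = i)) (fun e => ∫ t, max ((1 - lam e.2) * r e - t) 0 ∂(μ i))
  have hrow : ∀ i, ∀ e ∈ E.filter (fun e => e.1 = i), y e.1 e = y i e :=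
    fun i e he => by rw [(mem_filter.mp he).2]
  refine ⟨fun e => y e.1 e, ⟨fun e he => hy0 e.1 e (mem_filter.mpr ⟨he, rfl⟩),
    fun i => (sum_congr rfl (hrow i)).trans_le (hy1 i)⟩, ?_⟩
  rw [Lag_eq_sum_fiberwise E μ s r m _ _ lam hμ]
  refine congrArg _ (sum_congr rfl fun i _ => congrArg _ ?_)
  rw [bestDiscountedSurplus, ← hyg i]
  refine sum_congr rfl fun e he => ?_
  rw [hrow i e he, fwin_max_zero_eq_integral_max μ i (hμ0 i)]

end Lagrangian

theorem stmt_8_general (E : Finset (I × K)) (μ : I → Measure ℝ)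
    [∀ i, IsProbabilityMeasure (μ i)]
    (hμ : ∀ i, Integrable (fun t => t) (μ i))
    (hμ0 : ∀ i, μ i (Set.Iic 0) = 0)
    (s : I → ℝ) (hs : ∀ i, 0 ≤ s i)
    (r : I × K → ℝ)
    (m : K → ℝ) (lam : K → ℝ) :
    Lstar E μ s r m lam =
      (∑ k : K, lam k * m k) +
      ∑ i : I, s i *
        (insert (0 : ℝ) ((E.filter (fun e => e.1 = i)).image
          (fun e => ∫ t, max ((1 - lam e.2) * r e - t) 0 ∂(μ i)))).max'
          (Finset.insert_nonempty _ _) := by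
  refine IsGreatest.csSup_eq ⟨?_, ?_⟩
  · obtain ⟨x, hx, hLag⟩ := exists_Lag_eq_of_max_zero_bid E μ s r m lam hμ hμ0
    exact ⟨x, _, hx, fun e _ => le_max_right _ _, hLag.symm⟩
  · rintro v ⟨x, b, hx, -, rfl⟩
    exact Lag_le_of_mem_alloc E μ s r m x b lam hμ hs hx

/-- Closed form of the dual function: if the highest competing bid is strictly positive
almost surely, then for every `λ ∈ ℝ^K`,
`L*(λ) = Σ_k λ_k m_k + Σ_i s_i · max(0, max_{k ∈ K_i} ∫ max((1−λ_k) r_ik − t, 0) dμ_i(t))`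
(the term for `i` being `0` when `K_i = ∅`). -/
theorem stmt_8 (E : Finset (I × K)) (μ : I → Measure ℝ)
    [∀ i, IsProbabilityMeasure (μ i)]
    (hμ : ∀ i, Integrable (fun t => t) (μ i))
    (hμ0 : ∀ i, μ i (Set.Iic 0) = 0)
    (s : I → ℝ) (hs : ∀ i, 0 ≤ s i)
    (r : I × K → ℝ) (hr : ∀ e ∈ E, 0 ≤ r e)
    (m : K → ℝ) (lam : K → ℝ) :
    Lstar E μ s r m lam =
      (∑ k : K, lam k * m k) +
      ∑ i : I, s i *
        (insert (0 : ℝ) ((E.filter (fun e => e.1 = i)).image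
          (fun e => ∫ t, max ((1 - lam e.2) * r e - t) 0 ∂(μ i)))).max'
          (Finset.insert_nonempty _ _) :=
  stmt_8_general E μ hμ hμ0 s hs r m lam
end
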